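/- Let t, θ > 0. Then ∫_0^{∞} z · 4θ e^{2θ(z + θ t)} Φ(−2θ√t − z/√t) dz = √(2t/π) − 1/(2θ) + (e^{2θ² t}/θ) · Φ(−2θ√t). -/

import Mathlib

/-!
Write `s = √t`, `φ` for the standard normal density and `Φ` for its distribution function.
The integrand `z · 4θ e^{2θ(z + θs²)} Φ(-2θs - z/s)` has the explicit antiderivative
`G z = (2z - 1/θ) e^{2θ(z + θs²)} Φ(-2θs - z/s) - 2s φ(z/s) + Φ(-z/s) / θ`: differentiating it,
`φ' x = -x φ x` and the completed square `e^{2θ(z + θs²)} φ(2θs + z/s) = φ(z/s)` make every term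
but the integrand cancel. Mills' bound `Φ(-x) ≤ φ(x)/x` shows that `G` vanishes at infinity, and
since the integrand is nonnegative this already makes it integrable, so the integral is `-G 0`.
-/

open MeasureTheory Real Set Filter
open scoped Topology

/-- The standard normal cumulative distribution function. -/
noncomputable def stdNormalCdf (x : ℝ) : ℝ :=
  (Real.sqrt (2 * Real.pi))⁻¹ * ∫ u in Set.Iic x, Real.exp (-u^2 / 2)

noncomputable def stdNormalPdf (x : ℝ) : ℝ :=
  (√(2 * π))⁻¹ * exp (-x ^ 2 / 2)

lemma stdNormalPdf_pos (x : ℝ) : 0 < stdNormalPdf x := by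
  unfold stdNormalPdf; positivity

lemma continuous_stdNormalPdf : Continuous stdNormalPdf := by
  unfold stdNormalPdf; fun_prop

lemma hasDerivAt_stdNormalPdf (x : ℝ) : HasDerivAt stdNormalPdf (-x * stdNormalPdf x) x := by
  have h : HasDerivAt (fun y : ℝ => -y ^ 2 / 2) (-x) x :=
    (hasDerivAt_pow 2 x).neg.div_const 2 |>.congr_deriv (by ring)
  exact h.exp.const_mul (√(2 * π))⁻¹ |>.congr_deriv (by simp only [stdNormalPdf]; ring)

lemma integrable_stdNormalPdf : Integrable stdNormalPdf := by
  refine ((integrable_exp_neg_mul_sq (b := 1 / 2) (by norm_num)).const_mul (√(2 * π))⁻¹).congr ?_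
  filter_upwards with x
  simp only [stdNormalPdf]
  ring_nf

lemma stdNormalCdf_eq_setIntegral (x : ℝ) : stdNormalCdf x = ∫ u in Iic x, stdNormalPdf u :=
  (integral_const_mul _ _).symm

lemma hasDerivAt_stdNormalCdf (x : ℝ) : HasDerivAt stdNormalCdf (stdNormalPdf x) x := by
  have hΦ : ∀ y, stdNormalCdf y = stdNormalCdf 0 + ∫ u in (0 : ℝ)..y, stdNormalPdf u := fun y => by
    simp only [stdNormalCdf_eq_setIntegral]
    rw [← intervalIntegral.integral_Iic_sub_Iic integrable_stdNormalPdf.integrableOn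
      integrable_stdNormalPdf.integrableOn]
    ring
  rw [funext hΦ]
  exact (intervalIntegral.integral_hasDerivAt_right (continuous_stdNormalPdf.intervalIntegrable _ _)
    (continuous_stdNormalPdf.stronglyMeasurableAtFilter _ _)
    continuous_stdNormalPdf.continuousAt).const_add _

lemma stdNormalCdf_nonneg (x : ℝ) : 0 ≤ stdNormalCdf x := by
  rw [stdNormalCdf_eq_setIntegral]
  exact setIntegral_nonneg measurableSet_Iic fun u _ => (stdNormalPdf_pos u).le

lemma stdNormalPdf_neg (x : ℝ) : stdNormalPdf (-x) = stdNormalPdf x := by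
  simp [stdNormalPdf]

lemma stdNormalCdf_zero : stdNormalCdf 0 = 1 / 2 := by
  have hhalf : ∫ u in Ioi (0 : ℝ), exp (-(1 / 2) * u ^ 2) = √(2 * π) / 2 := by
    rw [integral_gaussian_Ioi]; ring_nf
  have hsym := integral_comp_neg_Ioi 0 stdNormalPdf
  simp only [stdNormalPdf_neg, neg_zero] at hsym
  rw [stdNormalCdf_eq_setIntegral, ← hsym]
  have hform : ∀ u : ℝ, -u ^ 2 / 2 = -(1 / 2) * u ^ 2 := fun u => by ring
  simp only [stdNormalPdf, integral_const_mul, hform, hhalf]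
  field_simp

lemma stdNormalCdf_neg_le {x : ℝ} (hx : 0 < x) : stdNormalCdf (-x) ≤ stdNormalPdf x / x := by
  have hpoint : ∀ u ∈ Iic (-x), stdNormalPdf u ≤ stdNormalPdf x * exp (x ^ 2) * exp (x * u) := by
    intro u _
    simp only [stdNormalPdf, mul_assoc, ← exp_add]
    gcongr
    nlinarith [sq_nonneg (u + x)]
  calc stdNormalCdf (-x) ≤ ∫ u in Iic (-x), stdNormalPdf x * exp (x ^ 2) * exp (x * u) := by
        rw [stdNormalCdf_eq_setIntegral]
        exact setIntegral_mono_on integrable_stdNormalPdf.integrableOn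
          ((integrableOn_exp_mul_Iic hx _).const_mul _) measurableSet_Iic hpoint
    _ = stdNormalPdf x / x := by
        rw [integral_const_mul, integral_exp_mul_Iic hx, mul_assoc, mul_div_assoc', ← exp_add,
          show x ^ 2 + x * -x = 0 by ring, exp_zero, mul_one_div]

lemma tendsto_stdNormalPdf_atTop : Tendsto stdNormalPdf atTop (𝓝 0) := by
  have h : Tendsto (fun x : ℝ => -(x ^ 2 / 2)) atTop atBot :=
    tendsto_neg_atTop_atBot.comp ((tendsto_pow_atTop two_ne_zero).atTop_div_const two_pos)
  have := (tendsto_exp_atBot.comp h).const_mul (√(2 * π))⁻¹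
  rw [mul_zero] at this
  exact this.congr fun x => by simp only [stdNormalPdf, Function.comp_apply, neg_div]

lemma tendsto_mul_stdNormalPdf_atTop : Tendsto (fun x => x * stdNormalPdf x) atTop (𝓝 0) := by
  have h := (tendsto_rpow_abs_mul_exp_neg_mul_sq_cocompact (a := 1 / 2) (by norm_num) 1).mono_left
    atTop_le_cocompact
  have := h.const_mul (√(2 * π))⁻¹
  rw [mul_zero] at this
  refine this.congr' ?_
  filter_upwards [eventually_ge_atTop 0] with x hx
  simp only [stdNormalPdf, rpow_one, abs_of_nonneg hx]
  ring_nf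

lemma tendsto_stdNormalCdf_neg_atTop : Tendsto (fun x => stdNormalCdf (-x)) atTop (𝓝 0) := by
  refine squeeze_zero' (Eventually.of_forall fun x => stdNormalCdf_nonneg _) ?_
    tendsto_stdNormalPdf_atTop
  filter_upwards [eventually_ge_atTop 1] with x hx
  calc stdNormalCdf (-x) ≤ stdNormalPdf x / x := stdNormalCdf_neg_le (by linarith)
    _ ≤ stdNormalPdf x := div_le_self (stdNormalPdf_pos x).le hx

lemma exp_mul_stdNormalPdf_add (θ : ℝ) {s : ℝ} (hs : s ≠ 0) (z : ℝ) :
    exp (2 * θ * (z + θ * s ^ 2)) * stdNormalPdf (2 * θ * s + z / s) = stdNormalPdf (z / s) := by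
  simp only [stdNormalPdf]
  rw [mul_left_comm, ← exp_add]
  congr 2
  field_simp
  ring

noncomputable def reflectedMeanPrimitive (θ s z : ℝ) : ℝ :=
  (2 * z - 1 / θ) * exp (2 * θ * (z + θ * s ^ 2)) * stdNormalCdf (-2 * θ * s - z / s)
    - 2 * s * stdNormalPdf (z / s) + stdNormalCdf (-(z / s)) / θ

section

variable {θ s : ℝ}

lemma hasDerivAt_reflectedMeanPrimitive (hθ : θ ≠ 0) (hs : s ≠ 0) (z : ℝ) :
    HasDerivAt (reflectedMeanPrimitive θ s)
      (z * (4 * θ * exp (2 * θ * (z + θ * s ^ 2)) * stdNormalCdf (-2 * θ * s - z / s))) z := by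
  have hE : HasDerivAt (fun z => exp (2 * θ * (z + θ * s ^ 2)))
      (exp (2 * θ * (z + θ * s ^ 2)) * (2 * θ * 1)) z :=
    (((hasDerivAt_id' z).add_const _).const_mul _).exp
  have hΦ : HasDerivAt (fun z => stdNormalCdf (-2 * θ * s - z / s))
      (stdNormalPdf (-2 * θ * s - z / s) * -(1 / s)) z :=
    (hasDerivAt_stdNormalCdf _).comp z (((hasDerivAt_id' z).div_const s).const_sub _)
  have hφ : HasDerivAt (fun z => stdNormalPdf (z / s))
      (-(z / s) * stdNormalPdf (z / s) * (1 / s)) z :=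
    (hasDerivAt_stdNormalPdf _).comp z ((hasDerivAt_id' z).div_const s)
  have hΦ' : HasDerivAt (fun z => stdNormalCdf (-(z / s)))
      (stdNormalPdf (-(z / s)) * -(1 / s)) z :=
    (hasDerivAt_stdNormalCdf _).comp z ((hasDerivAt_id' z).div_const s).neg
  have h := (((((hasDerivAt_id' z).const_mul 2).sub_const (1 / θ)).mul hE).mul hΦ).sub
    (hφ.const_mul (2 * s)) |>.add (hΦ'.div_const θ)
  refine h.congr_deriv ?_
  have key := exp_mul_stdNormalPdf_add θ hs z
  rw [show -2 * θ * s - z / s = -(2 * θ * s + z / s) by ring, stdNormalPdf_neg, stdNormalPdf_neg,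
    ← key, Pi.mul_apply]
  generalize stdNormalPdf (2 * θ * s + z / s) = P
  field_simp
  ring

lemma exp_mul_stdNormalCdf_le (hθ : 0 < θ) (hs : 0 < s) {z : ℝ} (hz : 0 ≤ z) :
    exp (2 * θ * (z + θ * s ^ 2)) * stdNormalCdf (-2 * θ * s - z / s)
      ≤ stdNormalPdf (z / s) / (2 * θ * s) := by
  have hx : 0 < 2 * θ * s := by positivity
  have hxz : 2 * θ * s ≤ 2 * θ * s + z / s := le_add_of_nonneg_right (by positivity)
  rw [show -2 * θ * s - z / s = -(2 * θ * s + z / s) by ring]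
  calc exp (2 * θ * (z + θ * s ^ 2)) * stdNormalCdf (-(2 * θ * s + z / s))
      ≤ exp (2 * θ * (z + θ * s ^ 2)) * (stdNormalPdf (2 * θ * s + z / s) / (2 * θ * s + z / s)) :=
        mul_le_mul_of_nonneg_left (stdNormalCdf_neg_le (hx.trans_le hxz)) (exp_pos _).le
    _ = stdNormalPdf (z / s) / (2 * θ * s + z / s) := by
        rw [mul_div_assoc', exp_mul_stdNormalPdf_add θ hs.ne']
    _ ≤ stdNormalPdf (z / s) / (2 * θ * s) :=
        div_le_div_of_nonneg_left (stdNormalPdf_pos _).le hx hxz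

lemma tendsto_reflectedMeanPrimitive_atTop (hθ : 0 < θ) (hs : 0 < s) :
    Tendsto (reflectedMeanPrimitive θ s) atTop (𝓝 0) := by
  have hzs : Tendsto (fun z => z / s) atTop atTop := tendsto_id.atTop_div_const hs
  have hmain : Tendsto (fun z => (2 * z - 1 / θ) * exp (2 * θ * (z + θ * s ^ 2))
      * stdNormalCdf (-2 * θ * s - z / s)) atTop (𝓝 0) := by
    have hbound := (tendsto_mul_stdNormalPdf_atTop.comp hzs).div_const θ
    rw [zero_div] at hbound
    have hθ' : 0 ≤ 1 / θ := by positivity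
    refine squeeze_zero' ?_ ?_ hbound
    · filter_upwards [eventually_ge_atTop (1 / θ)] with z hz
      have : 0 ≤ 2 * z - 1 / θ := by linarith
      have := stdNormalCdf_nonneg (-2 * θ * s - z / s)
      positivity
    · filter_upwards [eventually_ge_atTop (1 / θ)] with z hz
      have hz0 : 0 ≤ z := hθ'.trans hz
      have hΦ := stdNormalCdf_nonneg (-2 * θ * s - z / s)
      calc (2 * z - 1 / θ) * exp (2 * θ * (z + θ * s ^ 2)) * stdNormalCdf (-2 * θ * s - z / s)
          = (2 * z - 1 / θ) * (exp (2 * θ * (z + θ * s ^ 2)) * stdNormalCdf (-2 * θ * s - z / s)) :=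
            mul_assoc _ _ _
        _ ≤ 2 * z * (stdNormalPdf (z / s) / (2 * θ * s)) :=
            mul_le_mul (by linarith) (exp_mul_stdNormalCdf_le hθ hs hz0) (by positivity)
              (by positivity)
        _ = z / s * stdNormalPdf (z / s) / θ := by field_simp
  have hpdf := (tendsto_stdNormalPdf_atTop.comp hzs).const_mul (2 * s)
  have hcdf := (tendsto_stdNormalCdf_neg_atTop.comp hzs).div_const θ
  have h := (hmain.sub hpdf).add hcdf
  rw [mul_zero, sub_zero, zero_div, add_zero] at h
  exact h

lemma integral_Ioi_mul_exp_mul_stdNormalCdf (hθ : 0 < θ) (hs : 0 < s) :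
    ∫ z in Ioi (0 : ℝ),
        z * (4 * θ * exp (2 * θ * (z + θ * s ^ 2)) * stdNormalCdf (-2 * θ * s - z / s))
      = √(2 * s ^ 2 / π) - 1 / (2 * θ)
        + (exp (2 * θ ^ 2 * s ^ 2) / θ) * stdNormalCdf (-2 * θ * s) := by
  have hnonneg : ∀ z ∈ Ioi (0 : ℝ),
      0 ≤ z * (4 * θ * exp (2 * θ * (z + θ * s ^ 2)) * stdNormalCdf (-2 * θ * s - z / s)) :=
    fun z (hz : 0 < z) => by
      have := stdNormalCdf_nonneg (-2 * θ * s - z / s)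
      positivity
  rw [integral_Ioi_of_hasDerivAt_of_nonneg'
    (fun z _ => hasDerivAt_reflectedMeanPrimitive hθ.ne' hs.ne' z) hnonneg
    (tendsto_reflectedMeanPrimitive_atTop hθ hs)]
  have hsqrt : √(2 * s ^ 2 / π) = 2 * s / √(2 * π) := by
    rw [show 2 * s ^ 2 / π = (2 * s) ^ 2 / (2 * π) by field_simp,
      sqrt_div' _ (by positivity), sqrt_sq (by positivity)]
  simp only [reflectedMeanPrimitive, stdNormalPdf, hsqrt, zero_div, neg_zero, mul_zero, zero_add,
    sub_zero, stdNormalCdf_zero, ne_eq, OfNat.ofNat_ne_zero, not_false_eq_true, zero_pow, exp_zero]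
  rw [show 2 * θ * (θ * s ^ 2) = 2 * θ ^ 2 * s ^ 2 by ring]
  ring

end

theorem slowly_reflected_bm_mean (t θ : ℝ) (ht : 0 < t) (hθ : 0 < θ) :
    ∫ z in Set.Ioi (0 : ℝ),
        z * (4 * θ * Real.exp (2 * θ * (z + θ * t)) *
          stdNormalCdf (-2 * θ * Real.sqrt t - z / Real.sqrt t))
      = Real.sqrt (2 * t / Real.pi) - 1 / (2 * θ)
        + (Real.exp (2 * θ^2 * t) / θ) * stdNormalCdf (-2 * θ * Real.sqrt t) := by
  simpa only [sq_sqrt ht.le] using integral_Ioi_mul_exp_mul_stdNormalCdf hθ (sqrt_pos.2 ht)
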